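/- arXiv:2605.23301 — 6 statements merged into one kernel-verified Lean document; each statement's English description precedes it below -/
import Mathlib

section
/- Let η ∈ (0, 1/4] and R ≥ log₂(1/η). Then for every real y with y ≥ 1/η, we have y^(1/R) ≤ 1 + (η · log₂(1/η)) · y / R. -/
theorem stronger_bernoulli_large (η R y : ℝ) (hη0 : 0 < η) (hη : η ≤ 1 / 4)
    (hR : Real.logb 2 (1 / η) ≤ R)
    (hy : 1 / η ≤ y) :
    y ^ (1 / R) ≤ 1 + (η * Real.logb 2 (1 / η)) * y / R := by
  set L := Real.logb 2 (1 / η) with hLdef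
  have hη4 : (4 : ℝ) ≤ 1 / η := by
    rw [le_div_iff₀ hη0]; linarith
  have hL2 : (2 : ℝ) ≤ L := by
    have h1 : Real.logb 2 4 ≤ L :=
      Real.logb_le_logb_of_le (by norm_num) (by norm_num) hη4
    have h4 : Real.logb 2 4 = 2 := by
      rw [show (4:ℝ) = (2:ℝ) ^ (2:ℝ) by norm_num [Real.rpow_natCast]]
      exact Real.logb_rpow (by norm_num) (by norm_num)
    linarith
  have hR0 : (0 : ℝ) < R := lt_of_lt_of_le (by linarith) hR
  have hηy : 1 ≤ η * y := (div_le_iff₀' hη0).mp hy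
  have hy0 : 0 < y := lt_of_lt_of_le (by linarith) hy
  have hsplit : y ^ (1/R) = (1/η) ^ (1/R) * (η*y) ^ (1/R) := by
    rw [← Real.mul_rpow (by positivity) (by linarith)]
    congr 1
    field_simp
  have hinvR : (0:ℝ) < 1/R := by positivity
  have hinvR1 : 1/R ≤ 1 := by
    rw [div_le_one hR0]; linarith
  have h2L : (1/η : ℝ) = (2:ℝ) ^ L := by
    rw [hLdef, Real.rpow_logb (by norm_num) (by norm_num) (by positivity)]
  have hLr : L * (1/R) ≤ 1 := by
    rw [mul_one_div, div_le_one hR0]; exact hR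
  have hfac1 : (1/η) ^ (1/R) ≤ 1 + L * (1/R) := by
    rw [h2L, ← Real.rpow_mul (by norm_num)]
    have h2 : (2:ℝ) = 1 + 1 := by norm_num
    rw [h2]
    have hb := rpow_one_add_le_one_add_mul_self (s := (1:ℝ)) (by norm_num)
      (p := L * (1/R)) (by positivity) hLr
    linarith [hb]
  have hfac2 : (η*y) ^ (1/R) ≤ 1 + (η*y - 1) * (1/R) := by
    have hb := rpow_one_add_le_one_add_mul_self (s := η*y - 1) (by linarith)
      (p := 1/R) hinvR.le hinvR1
    have h1 : (1 + (η*y - 1)) = η*y := by ring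
    rw [h1] at hb
    linarith [hb]
  have hpos2 : (0:ℝ) ≤ 1 + (η*y - 1) * (1/R) := by nlinarith
  have hmul : y ^ (1/R) ≤ (1 + L * (1/R)) * (1 + (η*y - 1) * (1/R)) := by
    rw [hsplit]
    exact mul_le_mul hfac1 hfac2 (by positivity) (by nlinarith)
  have key : (1 + L * (1/R)) * (1 + (η*y - 1) * (1/R)) ≤ 1 + (η * L) * y * (1/R) := by
    nlinarith [mul_nonneg (mul_nonneg (sub_nonneg.2 hLr) (sub_nonneg.2 hηy)) hinvR.le,
      mul_nonneg (mul_nonneg (sub_nonneg.2 hL2) (sub_nonneg.2 hηy)) hinvR.le]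
  calc y ^ (1/R) ≤ (1 + L * (1/R)) * (1 + (η*y - 1) * (1/R)) := hmul
  _ ≤ 1 + (η * L) * y * (1/R) := key
  _ = 1 + (η * L) * y / R := by ring
end

section
/- Define the R-energy of a k-partite k-graph with parts A₁,…,A_k as E_R(A₁,…,A_k) = |A₁|⋯|A_k| · d(A₁,…,A_k)^R, where d is the edge density, with the convention that the energy is 0 when there are no edges. Then every k-partite k-graph (A₁,…,A_k) contains subsets A*ᵢ ⊆ Aᵢ such that E_R(A*₁,…,A*_k) ≥ E_R(A₁,…,A_k), and such that (A*₁,…,A*_k) is strictly R-balanced, meaning that for all subsets A'ᵢ ⊆ A*ᵢ with at least one inclusion proper, E_R(A*₁,…,A*_k) > E_R(A'₁,…,A'_k). -/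
open Finset

/-- The edges of a `k`-partite `k`-graph (given by a set `E` of tuples) induced on the
parts `B i`. -/
def inducedEdges {V : Type*} [DecidableEq V] {k : ℕ} (E : Finset (Fin k → V))
    (B : Fin k → Finset V) : Finset (Fin k → V) :=
  E.filter fun e => ∀ i, e i ∈ B i

/-- The edge density of the `k`-partite `k`-graph `E` induced on the parts `B i`. -/
noncomputable def hgDensity {V : Type*} [DecidableEq V] {k : ℕ} (E : Finset (Fin k → V))
    (B : Fin k → Finset V) : ℝ :=
  ((inducedEdges E B).card : ℝ) / ∏ i, ((B i).card : ℝ)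

/-- The `R`-energy `|B₁|⋯|B_k| · d(B₁,…,B_k)^R` of the `k`-partite `k`-graph `E` induced on
the parts `B i`.  (If there are no edges, the density is `0` and hence so is the energy.) -/
noncomputable def hgEnergy {V : Type*} [DecidableEq V] (R : ℝ) {k : ℕ}
    (E : Finset (Fin k → V)) (B : Fin k → Finset V) : ℝ :=
  (∏ i, ((B i).card : ℝ)) * hgDensity E B ^ R

/-- `(A₁,…,A_k)` is strictly `R`-balanced: any tuple of subsets, at least one of which is
proper, has strictly smaller `R`-energy. -/
def StrictlyBalanced {V : Type*} [DecidableEq V] (R : ℝ) {k : ℕ}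
    (E : Finset (Fin k → V)) (A : Fin k → Finset V) : Prop :=
  ∀ B : Fin k → Finset V, (∀ i, B i ⊆ A i) → B ≠ A → hgEnergy R E B < hgEnergy R E A

theorem exists_strictly_balanced_subgraph {V : Type*} [DecidableEq V] {k : ℕ} (R : ℝ)
    (hR : 1 < R) (A : Fin k → Finset V) (E : Finset (Fin k → V))
    (hE : ∀ e ∈ E, ∀ i, e i ∈ A i) :
    ∃ B : Fin k → Finset V, (∀ i, B i ⊆ A i) ∧
      hgEnergy R E A ≤ hgEnergy R E B ∧ StrictlyBalanced R E B := by
  classical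
  set S : Finset (Fin k → Finset V) := Fintype.piFinset fun i => (A i).powerset with hS
  have hmemS : ∀ B : Fin k → Finset V, B ∈ S ↔ ∀ i, B i ⊆ A i := by
    intro B
    simp [hS, Fintype.mem_piFinset]
  have hAS : A ∈ S := (hmemS A).mpr fun i => le_refl _
  have hSne : S.Nonempty := ⟨A, hAS⟩
  obtain ⟨M, hMS, hMmax⟩ := S.exists_max_image (hgEnergy R E) hSne
  set T : Finset (Fin k → Finset V) := S.filter fun B => hgEnergy R E B = hgEnergy R E M
    with hT
  have hMT : M ∈ T := by simp [hT, hMS]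
  obtain ⟨B, hBT, hBmin⟩ := T.exists_min_image (fun B => ∑ i, (B i).card) ⟨M, hMT⟩
  have hBS : B ∈ S := (Finset.mem_filter.mp hBT).1
  have hBE : hgEnergy R E B = hgEnergy R E M := (Finset.mem_filter.mp hBT).2
  have hBsub : ∀ i, B i ⊆ A i := (hmemS B).mp hBS
  refine ⟨B, hBsub, ?_, ?_⟩
  · rw [hBE]; exact hMmax A hAS
  · intro C hCB hCne
    have hCS : C ∈ S := (hmemS C).mpr fun i => (hCB i).trans (hBsub i)
    have hle : hgEnergy R E C ≤ hgEnergy R E B := by rw [hBE]; exact hMmax C hCS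
    rcases lt_or_eq_of_le hle with h | h
    · exact h
    · exfalso
      have hCT : C ∈ T := by
        rw [hT, Finset.mem_filter]
        exact ⟨hCS, h.trans hBE⟩
      have hsum : ∑ i, (B i).card ≤ ∑ i, (C i).card := hBmin C hCT
      obtain ⟨j, hj⟩ : ∃ j, C j ≠ B j := by
        by_contra hc
        push_neg at hc
        exact hCne (funext hc)
      have hlt : ∑ i, (C i).card < ∑ i, (B i).card := by
        apply Finset.sum_lt_sum (fun i _ => Finset.card_le_card (hCB i))
        exact ⟨j, Finset.mem_univ j, Finset.card_lt_card (lt_of_le_of_ne (hCB j) hj)⟩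
      omega
end

section
/- Let R > 1, let (A₁,…,A_k) be a strictly R-balanced k-partite k-graph with density p = d(A₁,…,A_k), and let Xᵢ ⊆ Aᵢ be subsets. Then the number of edges induced on (X₁,…,X_k) satisfies e(X₁,…,X_k) ≤ p·∏ᵢ|Xᵢ| + (p/R)·∏ᵢ|Aᵢ|. -/
open Finset

theorem edge_count_in_balanced {V : Type*} [DecidableEq V] {k : ℕ} (R : ℝ)
    (hR : 1 < R) (A X : Fin k → Finset V) (E : Finset (Fin k → V))
    (hE : ∀ e ∈ E, ∀ i, e i ∈ A i)
    (hbal : StrictlyBalanced R E A) (hX : ∀ i, X i ⊆ A i) :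
    ((inducedEdges E X).card : ℝ) ≤
      hgDensity E A * ∏ i, ((X i).card : ℝ) +
        (hgDensity E A / R) * ∏ i, ((A i).card : ℝ) := by
  classical
  set p := hgDensity E A with hp
  set d := hgDensity E X with hd
  set n : ℝ := ∏ i, ((X i).card : ℝ) with hn
  set N : ℝ := ∏ i, ((A i).card : ℝ) with hN
  have hn0 : 0 ≤ n := Finset.prod_nonneg (fun i _ => Nat.cast_nonneg _)
  have hN0 : 0 ≤ N := Finset.prod_nonneg (fun i _ => Nat.cast_nonneg _)
  have hp0 : 0 ≤ p := div_nonneg (Nat.cast_nonneg _) hN0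
  have hd0 : 0 ≤ d := div_nonneg (Nat.cast_nonneg _) hn0
  have hR0 : (0:ℝ) < R := lt_trans one_pos hR
  have hkey : n * d ^ R ≤ N * p ^ R := by
    by_cases hXA : X = A
    · rw [hp, hd, hn, hN, hXA]
    · exact le_of_lt (hbal X hX hXA)
  rcases eq_or_lt_of_le hn0 with hn0' | hnpos
  · -- n = 0 : some X i is empty, so no induced edges
    obtain ⟨i, -, hi⟩ := Finset.prod_eq_zero_iff.mp hn0'.symm
    have hXi : X i = ∅ := Finset.card_eq_zero.mp (Nat.cast_eq_zero.mp hi)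
    have he : inducedEdges E X = ∅ := by
      apply Finset.filter_false_of_mem
      intro e _ h
      exact absurd (h i) (by simp [hXi])
    rw [he, ← hn0']
    simp only [Finset.card_empty, Nat.cast_zero, mul_zero, zero_add]
    exact mul_nonneg (div_nonneg hp0 hR0.le) hN0
  · -- n > 0
    have hnne : n ≠ 0 := ne_of_gt hnpos
    have he : ((inducedEdges E X).card : ℝ) = n * d := by
      rw [hd, hgDensity, ← hn, mul_div_cancel₀ _ hnne]
    rw [he]
    have h2 : d ^ R ≤ N * p ^ R / n := (le_div_iff₀ hnpos).mpr (by linarith [hkey])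
    have h3 : d ≤ (N * p ^ R / n) ^ R⁻¹ := by
      have hdr : (d ^ R) ^ R⁻¹ = d := by
        rw [← Real.rpow_mul hd0, mul_inv_cancel₀ (ne_of_gt hR0), Real.rpow_one]
      rw [← hdr]
      exact Real.rpow_le_rpow (Real.rpow_nonneg hd0 _) h2 (le_of_lt (inv_pos.mpr hR0))
    have hrw : (N * p ^ R / n) ^ R⁻¹ = N ^ R⁻¹ * p / n ^ R⁻¹ := by
      rw [Real.div_rpow (mul_nonneg hN0 (Real.rpow_nonneg hp0 _)) hn0,
        Real.mul_rpow hN0 (Real.rpow_nonneg hp0 _), ← Real.rpow_mul hp0,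
        mul_inv_cancel₀ (ne_of_gt hR0), Real.rpow_one]
    have h4 : n * d ≤ p * (n ^ (1 - R⁻¹) * N ^ R⁻¹) := by
      have : n * ((N * p ^ R / n) ^ R⁻¹) = p * (n ^ (1 - R⁻¹) * N ^ R⁻¹) := by
        rw [hrw, Real.rpow_sub hnpos, Real.rpow_one]
        ring
      calc n * d ≤ n * ((N * p ^ R / n) ^ R⁻¹) := by
            exact mul_le_mul_of_nonneg_left h3 hn0
        _ = p * (n ^ (1 - R⁻¹) * N ^ R⁻¹) := this
    have hgm : n ^ (1 - R⁻¹) * N ^ R⁻¹ ≤ (1 - R⁻¹) * n + R⁻¹ * N := by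
      apply Real.geom_mean_le_arith_mean2_weighted
        (by rw [sub_nonneg]; exact inv_le_one_of_one_le₀ hR.le) 
        (le_of_lt (inv_pos.mpr hR0)) hn0 hN0 (by ring)
    have h5 : p * (n ^ (1 - R⁻¹) * N ^ R⁻¹) ≤ p * ((1 - R⁻¹) * n + R⁻¹ * N) :=
      mul_le_mul_of_nonneg_left hgm hp0
    have hfin : p * ((1 - R⁻¹) * n + R⁻¹ * N) ≤ p * n + p / R * N := by
      have h6 : 0 ≤ p * (R⁻¹ * n) := mul_nonneg hp0 (mul_nonneg (inv_nonneg.mpr hR0.le) hn0)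
      have h7 : p / R * N = p * (R⁻¹ * N) := by rw [div_eq_mul_inv]; ring
      have h8 : p * ((1 - R⁻¹) * n + R⁻¹ * N) = p * n - p * (R⁻¹ * n) + p * (R⁻¹ * N) := by
        ring
      linarith
    linarith
end

section
/- Let η ∈ (0, 1/4], let R ≥ log₂(1/η), let (A₁,…,A_k) be a strictly R-balanced k-partite k-graph with density p, and let Xᵢ ⊆ Aᵢ be subsets satisfying (∏ᵢ|Xᵢ|)/(∏ᵢ|Aᵢ|) ∈ [0,η] ∪ [(1-η)², 1]. Then e(X₁,…,X_k) ≤ p·∏ᵢ|Xᵢ| + (η·log₂(1/η))·(p/R)·∏ᵢ|Aᵢ|. -/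
open Finset

/-!
Write `x = ∏ |X i| / ∏ |A i|`. Strict balance says the `R`-energy of `(X i)` is at most that of
`(A i)`; taking `R`-th roots gives `e(X) ≤ p · ∏ |A i| · x ^ (1 - 1/R)`. The function
`x ↦ x ^ (1 - 1/R)` is concave, so it lies below its tangent lines. For `x ≤ η` use the tangent at
`η`: its slope factor is `η ^ (-1/R) = 2 ^ (log₂(1/η)/R) ≤ 1 + log₂(1/η)/R` by Bernoulli's
inequality. For `x ≥ (1 - η)²` use the tangent at `1`, which exceeds `x` by `(1 - x)/R ≤ 2η/R`.
-/

namespace Real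

lemma rpow_le_tangent_line {p x y : ℝ} (hp0 : 0 ≤ p) (hp1 : p ≤ 1) (hx : 0 ≤ x) (hy : 0 < y) :
    x ^ p ≤ y ^ (p - 1) * (p * x + (1 - p) * y) := by
  have amgm := geom_mean_le_arith_mean2_weighted hp0 (sub_nonneg.2 hp1) hx hy.le
    (add_sub_cancel p 1)
  have hy1 : y ^ (p - 1) * y ^ (1 - p) = 1 := by rw [← rpow_add hy]; simp
  calc x ^ p = y ^ (p - 1) * (x ^ p * y ^ (1 - p)) := by rw [mul_left_comm, hy1, mul_one]
    _ ≤ y ^ (p - 1) * (p * x + (1 - p) * y) := by gcongr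

lemma two_le_logb_one_div {η : ℝ} (hη0 : 0 < η) (hη : η ≤ 1 / 4) : 2 ≤ logb 2 (1 / η) := by
  rw [le_logb_iff_rpow_le one_lt_two (by positivity), le_div_iff₀ hη0]
  norm_num
  linarith

lemma rpow_inv_le_one_add_logb_div {y R : ℝ} (hy : 0 < y) (hL : 0 ≤ logb 2 y)
    (hLR : logb 2 y ≤ R) : y ^ R⁻¹ ≤ 1 + logb 2 y / R := by
  have h := rpow_one_add_le_one_add_mul_self (s := 1) (by norm_num)
    (div_nonneg hL (hL.trans hLR)) (div_le_one_of_le₀ hLR (hL.trans hLR))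
  rw [one_add_one_eq_two, mul_one, div_eq_mul_inv, rpow_mul zero_le_two, rpow_logb two_pos
    one_lt_two.ne' hy] at h
  rwa [div_eq_mul_inv]

lemma rpow_one_sub_inv_le_of_le {η R x : ℝ} (hη0 : 0 < η) (hL : 2 ≤ logb 2 (1 / η))
    (hLR : logb 2 (1 / η) ≤ R) (hx0 : 0 ≤ x) (hxη : x ≤ η) :
    x ^ (1 - R⁻¹) ≤ x + η * logb 2 (1 / η) / R := by
  set L := logb 2 (1 / η)
  have hR : 0 < R := by linarith
  have hRinv : R⁻¹ ≤ 2⁻¹ := inv_anti₀ two_pos (by linarith)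
  have hslope : 0 ≤ (η - x) * (L * (1 - R⁻¹) - 1) * R⁻¹ := by
    have : 0 ≤ L * (1 - R⁻¹) - 1 := by nlinarith
    positivity
  have hη_pow : η ^ (1 - R⁻¹ - 1) = (1 / η) ^ R⁻¹ := by
    rw [sub_sub_cancel_left, rpow_neg hη0.le, one_div, inv_rpow hη0.le]
  calc x ^ (1 - R⁻¹)
      ≤ (1 / η) ^ R⁻¹ * ((1 - R⁻¹) * x + (1 - (1 - R⁻¹)) * η) := by
        rw [← hη_pow]
        exact rpow_le_tangent_line (by linarith) (by linarith [inv_pos.2 hR]) hx0 hη0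
    _ ≤ (1 + L / R) * ((1 - R⁻¹) * x + R⁻¹ * η) := by
        rw [sub_sub_cancel]
        gcongr
        · have : 0 ≤ 1 - R⁻¹ := by linarith
          positivity
        · exact rpow_inv_le_one_add_logb_div (by positivity) (by linarith) hLR
    _ ≤ x + η * L / R := by linear_combination hslope

lemma rpow_one_sub_inv_le_of_sq_le {η R x : ℝ} (hη0 : 0 < η) (hL : 2 ≤ logb 2 (1 / η))
    (hLR : logb 2 (1 / η) ≤ R) (hx : (1 - η) ^ 2 ≤ x) :
    x ^ (1 - R⁻¹) ≤ x + η * logb 2 (1 / η) / R := by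
  have hR : 0 < R := by linarith
  have hRinv : R⁻¹ ≤ 1 := by rw [inv_le_one₀ hR]; linarith
  calc x ^ (1 - R⁻¹) ≤ (1 : ℝ) ^ (1 - R⁻¹ - 1) * ((1 - R⁻¹) * x + (1 - (1 - R⁻¹)) * 1) :=
        rpow_le_tangent_line (by linarith) (by linarith [inv_pos.2 hR]) (by nlinarith) one_pos
    _ = x + (1 - x) * R⁻¹ := by rw [one_rpow]; ring
    _ ≤ x + (2 * η) * R⁻¹ := by gcongr; nlinarith
    _ ≤ x + η * logb 2 (1 / η) / R := by
        rw [div_eq_mul_inv]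
        have : 2 * η ≤ η * logb 2 (1 / η) := by nlinarith
        gcongr

lemma rpow_one_sub_inv_le_add {η R x : ℝ} (hη0 : 0 < η) (hη : η ≤ 1 / 4)
    (hLR : logb 2 (1 / η) ≤ R) (hx0 : 0 ≤ x) (hx : x ≤ η ∨ (1 - η) ^ 2 ≤ x) :
    x ^ (1 - R⁻¹) ≤ x + η * logb 2 (1 / η) / R := by
  have hL := two_le_logb_one_div hη0 hη
  rcases hx with hxη | hx
  · exact rpow_one_sub_inv_le_of_le hη0 hL hLR hx0 hxη
  · exact rpow_one_sub_inv_le_of_sq_le hη0 hL hLR hx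

lemma mul_le_mul_mul_rpow_of_mul_rpow_le {d D P Q R : ℝ} (hd : 0 ≤ d) (hD : 0 ≤ D) (hP : 0 < P)
    (hQ : 0 < Q) (hR : 0 < R) (h : P * d ^ R ≤ Q * D ^ R) :
    d * P ≤ D * Q * (P / Q) ^ (1 - R⁻¹) := by
  have hroot : d ≤ D * (Q / P) ^ R⁻¹ := by
    rw [← rpow_le_rpow_iff hd (by positivity) hR, mul_rpow hD (by positivity),
      ← rpow_mul (by positivity), inv_mul_cancel₀ hR.ne', rpow_one, mul_div, le_div_iff₀ hP]
    linarith
  calc d * P ≤ D * (Q / P) ^ R⁻¹ * P := by gcongr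
    _ = D * Q * (P / Q) ^ (1 - R⁻¹) := by
      rw [rpow_sub (by positivity), rpow_one, ← inv_div, inv_rpow (by positivity)]
      field_simp

end Real

section Hypergraph

variable {V : Type*} [DecidableEq V] {k : ℕ}

lemma hgDensity_nonneg (E : Finset (Fin k → V)) (B : Fin k → Finset V) : 0 ≤ hgDensity E B := by
  unfold hgDensity
  positivity

lemma card_inducedEdges_eq (E : Finset (Fin k → V)) (B : Fin k → Finset V) :
    ((inducedEdges E B).card : ℝ) = hgDensity E B * ∏ i, ((B i).card : ℝ) := by
  by_cases hB : ∏ i, ((B i).card : ℝ) = 0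
  · obtain ⟨i, -, hi⟩ := prod_eq_zero_iff.1 hB
    have hBi : B i = ∅ := card_eq_zero.1 (by exact_mod_cast hi)
    have : inducedEdges E B = ∅ :=
      filter_eq_empty_iff.2 fun e _ he => by simpa [hBi] using he i
    simp [this, hB]
  · rw [hgDensity, div_mul_cancel₀ _ hB]

lemma StrictlyBalanced.hgEnergy_le {R : ℝ} {E : Finset (Fin k → V)} {A X : Fin k → Finset V}
    (hbal : StrictlyBalanced R E A) (hX : ∀ i, X i ⊆ A i) : hgEnergy R E X ≤ hgEnergy R E A := by
  rcases eq_or_ne X A with rfl | hXA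
  · rfl
  · exact (hbal X hX hXA).le

lemma StrictlyBalanced.card_inducedEdges_le {R : ℝ} {E : Finset (Fin k → V)}
    {A X : Fin k → Finset V} (hbal : StrictlyBalanced R E A) (hX : ∀ i, X i ⊆ A i) (hR : 0 < R)
    (hPX : 0 < ∏ i, ((X i).card : ℝ)) (hPA : 0 < ∏ i, ((A i).card : ℝ)) :
    ((inducedEdges E X).card : ℝ) ≤ hgDensity E A * (∏ i, ((A i).card : ℝ)) *
      ((∏ i, ((X i).card : ℝ)) / ∏ i, ((A i).card : ℝ)) ^ (1 - R⁻¹) := by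
  rw [card_inducedEdges_eq]
  exact Real.mul_le_mul_mul_rpow_of_mul_rpow_le (hgDensity_nonneg E X) (hgDensity_nonneg E A)
    hPX hPA hR (hbal.hgEnergy_le hX)

end Hypergraph

theorem edge_count_in_balanced_strengthened_general {V : Type*} [DecidableEq V] {k : ℕ}
    (η R : ℝ) (hη0 : 0 < η) (hη : η ≤ 1 / 4) (hR : Real.logb 2 (1 / η) ≤ R)
    (A X : Fin k → Finset V) (E : Finset (Fin k → V))
    (hbal : StrictlyBalanced R E A) (hX : ∀ i, X i ⊆ A i)
    (hratio : (∏ i, ((X i).card : ℝ)) / (∏ i, ((A i).card : ℝ)) ≤ η ∨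
      ((1 - η) ^ 2 ≤ (∏ i, ((X i).card : ℝ)) / (∏ i, ((A i).card : ℝ)) ∧
        (∏ i, ((X i).card : ℝ)) / (∏ i, ((A i).card : ℝ)) ≤ 1)) :
    ((inducedEdges E X).card : ℝ) ≤
      hgDensity E A * ∏ i, ((X i).card : ℝ) +
        (η * Real.logb 2 (1 / η)) * (hgDensity E A / R) * ∏ i, ((A i).card : ℝ) := by
  have hL := Real.two_le_logb_one_div hη0 hη
  have hR0 : 0 < R := by linarith
  have hp := hgDensity_nonneg E A
  have hPA0 : 0 ≤ ∏ i, ((A i).card : ℝ) := by positivity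
  rcases (show 0 ≤ ∏ i, ((X i).card : ℝ) by positivity).eq_or_lt with hPX | hPX
  · rw [card_inducedEdges_eq, ← hPX, mul_zero, mul_zero, zero_add]
    exact mul_nonneg (mul_nonneg (mul_nonneg hη0.le (by linarith)) (div_nonneg hp hR0.le)) hPA0
  have hPA : 0 < ∏ i, ((A i).card : ℝ) :=
    hPX.trans_le (prod_le_prod (fun _ _ => by positivity)
      fun i _ => Nat.cast_le.2 (card_le_card (hX i)))
  calc ((inducedEdges E X).card : ℝ)
      ≤ hgDensity E A * (∏ i, ((A i).card : ℝ)) *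
          ((∏ i, ((X i).card : ℝ)) / ∏ i, ((A i).card : ℝ)) ^ (1 - R⁻¹) :=
        hbal.card_inducedEdges_le hX hR0 hPX hPA
    _ ≤ hgDensity E A * (∏ i, ((A i).card : ℝ)) *
          ((∏ i, ((X i).card : ℝ)) / (∏ i, ((A i).card : ℝ)) + η * Real.logb 2 (1 / η) / R) := by
        gcongr
        exact Real.rpow_one_sub_inv_le_add hη0 hη hR (by positivity) (hratio.imp_right And.left)
    _ = _ := by
        rw [mul_add, mul_assoc _ _ (_ / _), mul_div_cancel₀ _ hPA.ne']
        ring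

theorem edge_count_in_balanced_strengthened {V : Type*} [DecidableEq V] {k : ℕ}
    (η R : ℝ) (hη0 : 0 < η) (hη : η ≤ 1 / 4) (hR : Real.logb 2 (1 / η) ≤ R)
    (A X : Fin k → Finset V) (E : Finset (Fin k → V))
    (hE : ∀ e ∈ E, ∀ i, e i ∈ A i)
    (hbal : StrictlyBalanced R E A) (hX : ∀ i, X i ⊆ A i)
    (hratio : (∏ i, ((X i).card : ℝ)) / (∏ i, ((A i).card : ℝ)) ≤ η ∨
      ((1 - η) ^ 2 ≤ (∏ i, ((X i).card : ℝ)) / (∏ i, ((A i).card : ℝ)) ∧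
        (∏ i, ((X i).card : ℝ)) / (∏ i, ((A i).card : ℝ)) ≤ 1)) :
    ((inducedEdges E X).card : ℝ) ≤
      hgDensity E A * ∏ i, ((X i).card : ℝ) +
        (η * Real.logb 2 (1 / η)) * (hgDensity E A / R) * ∏ i, ((A i).card : ℝ) :=
  edge_count_in_balanced_strengthened_general η R hη0 hη hR A X E hbal hX hratio
end

section
/- Let G be a tripartite graph with parts A, B, C, let κ = κ₃(G) be its triangle density, and suppose every edge between A and B lies in at least τ|C| triangles, where τ > 0. Let C₀ ⊆ C be the set of vertices c ∈ C lying in at most (κ/4)|A||B| triangles. Then |C \ C₀| ≥ (3τ/4)|C|. -/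
/-!
Counting triangles edge by edge, every edge of `A × B` lies in at least `τ|C|` triangles, so
there are at least `τ|C| e(A,B)` of them. The light vertices of `C`, each in at most
`κ|A||B|/4` triangles, carry at most a quarter of all triangles. The remaining three quarters,
at least `(3/4) τ|C| e(A,B)` triangles, sit on heavy vertices, each in at most `e(A,B)`
triangles, so there are at least `(3/4) τ|C|` heavy vertices.
-/

open Finset

/-- The number of edges of the relation `G` between the finsets `X` and `Y`. -/
def bipE {V : Type*} [DecidableEq V] (G : V → V → Prop) [DecidableRel G]
    (X Y : Finset V) : ℕ :=
  ((X ×ˢ Y).filter fun p => G p.1 p.2).card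

/-- The edge density of the relation `G` between the finsets `X` and `Y`. -/
noncomputable def bipD {V : Type*} [DecidableEq V] (G : V → V → Prop) [DecidableRel G]
    (X Y : Finset V) : ℝ :=
  (bipE G X Y : ℝ) / ((X.card : ℝ) * (Y.card : ℝ))

/-- The number of triangles of `G` with one vertex in each of `A`, `B`, `C`. -/
def triCount {V : Type*} [DecidableEq V] (G : V → V → Prop) [DecidableRel G]
    (A B C : Finset V) : ℕ :=
  ((A ×ˢ B ×ˢ C).filter fun p => G p.1 p.2.1 ∧ G p.1 p.2.2 ∧ G p.2.1 p.2.2).card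

/-- The number of triangles of `G` (with `A`-vertex and `B`-vertex) through a fixed
vertex `c`. -/
def triThrough {V : Type*} [DecidableEq V] (G : V → V → Prop) [DecidableRel G]
    (A B : Finset V) (c : V) : ℕ :=
  ((A ×ˢ B).filter fun p => G p.1 p.2 ∧ G p.1 c ∧ G p.2 c).card

section Triangles

variable {V : Type*} [DecidableEq V] (G : V → V → Prop) [DecidableRel G] (A B C : Finset V)

lemma triCount_eq_sum_triThrough : triCount G A B C = ∑ c ∈ C, triThrough G A B c := by
  simp only [triCount, triThrough, card_filter, sum_product]
  exact (sum_congr rfl fun _ _ => sum_comm).trans sum_comm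

lemma triCount_eq_sum_card_commonNeighbors :
    triCount G A B C = ∑ p ∈ (A ×ˢ B).filter (fun p => G p.1 p.2),
      (C.filter fun c => G p.1 c ∧ G p.2 c).card := by
  rw [sum_filter]
  simp only [triCount, card_filter, sum_product]
  refine sum_congr rfl fun a _ => sum_congr rfl fun b _ => ?_
  by_cases hab : G a b <;> simp [hab]

lemma triThrough_le_bipE (c : V) : triThrough G A B c ≤ bipE G A B :=
  card_le_card fun _ hp => by
    simp only [mem_filter] at hp ⊢
    exact ⟨hp.1, hp.2.1⟩

lemma mul_bipE_le_triCount (τ : ℝ)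
    (hcodeg : ∀ a ∈ A, ∀ b ∈ B, G a b →
      τ * (C.card : ℝ) ≤ ((C.filter fun c => G a c ∧ G b c).card : ℝ)) :
    τ * C.card * bipE G A B ≤ triCount G A B C := by
  rw [triCount_eq_sum_card_commonNeighbors, bipE, Nat.cast_sum, mul_comm, ← nsmul_eq_mul,
    ← sum_const]
  refine sum_le_sum fun p hp => ?_
  simp only [mem_filter, mem_product] at hp
  exact hcodeg p.1 hp.1.1 p.2 hp.1.2 hp.2

end Triangles

lemma sum_le_card_mul_add_mul_card_filter_lt {ι : Type*} (s : Finset ι) (f : ι → ℝ)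
    (t M : ℝ) (ht : 0 ≤ t) (hM : ∀ i ∈ s, f i ≤ M) :
    ∑ i ∈ s, f i ≤ s.card * t + M * (s.filter fun i => t < f i).card := by
  rw [← sum_filter_not_add_sum_filter s (fun i => t < f i)]
  gcongr
  · calc ∑ i ∈ s.filter (fun i => ¬ t < f i), f i
        ≤ (s.filter fun i => ¬ t < f i).card * t :=
          sum_le_card_nsmul _ _ _ (fun i hi => not_lt.1 (mem_filter.1 hi).2) |>.trans_eq
            (nsmul_eq_mul _ _)
      _ ≤ s.card * t := by gcongr; exact filter_subset _ _
  · rw [mul_comm]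
    exact (sum_le_card_nsmul _ _ _ fun i hi => hM i (mem_filter.1 hi).1).trans_eq
      (nsmul_eq_mul _ _)

-- An equality unless `x * y * z = 0`, when the left side is `0` since `T / 0 = 0`.
lemma mul_div_mul_mul_div_four_le {x y z T : ℝ} (hT : 0 ≤ T) :
    z * (T / (x * y * z) / 4 * x * y) ≤ T / 4 :=
  calc z * (T / (x * y * z) / 4 * x * y) = T * ((x * y * z) / (x * y * z)) / 4 := by ring
    _ ≤ T * 1 / 4 := by gcongr; exact div_self_le_one _
    _ = T / 4 := by ring

open scoped Classical in
theorem heavy_vertices_lower_bound_general {V : Type*} [DecidableEq V]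
    (G : V → V → Prop) [DecidableRel G] (A B C : Finset V) (τ : ℝ)
    (he : 1 ≤ bipE G A B)
    (hext : ∀ a ∈ A, ∀ b ∈ B, G a b →
      τ * (C.card : ℝ) ≤ ((C.filter fun c => G a c ∧ G b c).card : ℝ)) :
    (3 * τ / 4) * (C.card : ℝ) ≤
      (((C.filter fun c => ¬ ((triThrough G A B c : ℝ) ≤
          (triCount G A B C : ℝ) / ((A.card : ℝ) * B.card * C.card) / 4
            * A.card * B.card))).card : ℝ) := by
  have hE : (0 : ℝ) < bipE G A B := by exact_mod_cast he
  have hsplit := sum_le_card_mul_add_mul_card_filter_lt C (fun c => (triThrough G A B c : ℝ))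
    ((triCount G A B C : ℝ) / ((A.card : ℝ) * B.card * C.card) / 4 * A.card * B.card)
    (bipE G A B) (by positivity) fun c _ => by exact_mod_cast triThrough_le_bipE G A B c
  rw [← Nat.cast_sum, ← triCount_eq_sum_triThrough] at hsplit
  simp only [← not_le] at hsplit
  have hlight := mul_div_mul_mul_div_four_le (x := A.card) (y := B.card) (z := C.card)
    (Nat.cast_nonneg (triCount G A B C))
  have hT := mul_bipE_le_triCount G A B C τ hext
  refine le_of_mul_le_mul_right ?_ hE
  linarith

open scoped Classical in
theorem heavy_vertices_lower_bound {V : Type*} [DecidableEq V]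
    (G : V → V → Prop) [DecidableRel G] (A B C : Finset V) (τ : ℝ)
    (hτ0 : 0 < τ) (he : 1 ≤ bipE G A B)
    (hext : ∀ a ∈ A, ∀ b ∈ B, G a b →
      τ * (C.card : ℝ) ≤ ((C.filter fun c => G a c ∧ G b c).card : ℝ)) :
    (3 * τ / 4) * (C.card : ℝ) ≤
      (((C.filter fun c => ¬ ((triThrough G A B c : ℝ) ≤
          (triCount G A B C : ℝ) / ((A.card : ℝ) * B.card * C.card) / 4
            * A.card * B.card))).card : ℝ) :=
  heavy_vertices_lower_bound_general G A B C τ he hext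
end

section
/- Let p ∈ (0, 1/2], let G be a bipartite graph with parts X and Y with d(X,Y) ≥ p. Then G contains a complete bipartite subgraph K_{t,t} with t = ⌊ log₂(min{|X|,|Y|}) / (2 log₂(1/p)) ⌋. -/
open Finset

/-! Count the pairs `(x, f)` where `f : Fin t → Y` and `x ∈ X` is adjacent to every `f i`.
By the power mean inequality there are `∑ₓ deg(x)ᵗ ≥ pᵗ|X||Y|ᵗ` of them. At most
`C(t,2)|Y|ᵗ⁻¹` tuples are not injective, and each has at most `|X|` common neighbours, so if
every injective tuple had fewer than `t` common neighbours there would be at most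
`(t-1)|Y|ᵗ + C(t,2)|X||Y|ᵗ⁻¹` pairs. The choice of `t` gives `(1/p)²ᵗ ≤ min(|X|,|Y|)` and
`t + C(t,2) < 2ᵗ ≤ (1/p)ᵗ`, which makes this smaller than `pᵗ|X||Y|ᵗ`. -/

theorem Nat.choose_two_succ (t : ℕ) : (t + 1).choose 2 = t + t.choose 2 := by
  simp [Nat.choose_succ_succ']

theorem Nat.pow_le_descFactorial_add_choose_two_mul (n : ℕ) :
    ∀ k : ℕ, n ^ k ≤ n.descFactorial k + k.choose 2 * n ^ (k - 1)
  | 0 => by simp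
  | k + 1 => by
    have ih := Nat.pow_le_descFactorial_add_choose_two_mul n k
    have hD := n.descFactorial_le_pow k
    have hn : n ≤ (n - k) + k := by omega
    rw [Nat.descFactorial_succ, Nat.choose_two_succ, Nat.add_sub_cancel, pow_succ]
    rcases k with _ | k
    · simp
    · rw [Nat.add_sub_cancel] at ih
      calc n ^ (k + 1) * n
          ≤ (n.descFactorial (k + 1) + (k + 1).choose 2 * n ^ k) * n := by gcongr
        _ = n * n.descFactorial (k + 1) + (k + 1).choose 2 * n ^ (k + 1) := by ring
        _ ≤ ((n - (k + 1)) + (k + 1)) * n.descFactorial (k + 1)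
              + (k + 1).choose 2 * n ^ (k + 1) := by gcongr
        _ ≤ _ := by nlinarith

theorem Nat.add_choose_two_lt_two_pow : ∀ t : ℕ, t + t.choose 2 < 2 ^ t
  | 0 => by simp
  | t + 1 => by
    have := Nat.add_choose_two_lt_two_pow t
    have := Nat.lt_two_pow_self (n := t)
    rw [Nat.choose_two_succ, pow_succ]
    omega

theorem pow_mul_card_le_sum_pow {ι K : Type*} [Field K] [LinearOrder K] [IsStrictOrderedRing K]
    {s : Finset ι} {f : ι → K} (hf : ∀ i ∈ s, 0 ≤ f i) {c : K} (hc : 0 ≤ c)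
    (hmean : c * #s ≤ ∑ i ∈ s, f i) : ∀ t : ℕ, c ^ t * #s ≤ ∑ i ∈ s, f i ^ t
  | 0 => by simp
  | u + 1 => by
    rcases s.eq_empty_or_nonempty with rfl | hs
    · simp
    have hs : (0 : K) < #s := by exact_mod_cast hs.card_pos
    refine le_of_mul_le_mul_left ?_ (pow_pos hs u)
    calc (#s : K) ^ u * (c ^ (u + 1) * #s) = (c * #s) ^ (u + 1) := by ring
      _ ≤ (∑ i ∈ s, f i) ^ (u + 1) := by gcongr
      _ ≤ #s ^ u * ∑ i ∈ s, f i ^ (u + 1) := pow_sum_le_card_mul_sum_pow hf u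

section CommonNeighbors

variable {α β : Type*} [Fintype α] (r : α → β → Prop) [DecidableRel r]

def commonNeighbors {ι : Type*} [Fintype ι] (f : ι → β) : Finset α := {a | ∀ i, r a (f i)}

theorem mem_commonNeighbors {ι : Type*} [Fintype ι] {f : ι → β} {a : α} :
    a ∈ commonNeighbors r f ↔ ∀ i, r a (f i) := by
  simp [commonNeighbors]

theorem sum_card_commonNeighbors [Fintype β] (t : ℕ) :
    ∑ f : Fin t → β, #(commonNeighbors r f) = ∑ a, #{b | r a b} ^ t := by
  calc ∑ f : Fin t → β, #(commonNeighbors r f)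
      = ∑ a, #{f : Fin t → β | ∀ i, r a (f i)} := by
        simp only [commonNeighbors, card_filter]
        -- the two sides differ in the `Decidable (∀ i, _)` instance, hence `convert`
        convert sum_comm
    _ = ∑ a, #{b | r a b} ^ t := by
        refine sum_congr rfl fun a _ => ?_
        rw [← Fintype.card_piFinset_const]
        congr 1
        ext f
        simp [Fintype.mem_piFinset]

theorem card_filter_not_injective_le [Fintype β] [DecidableEq β] (t : ℕ) :
    #{f : Fin t → β | ¬ Function.Injective f} ≤ t.choose 2 * Fintype.card β ^ (t - 1) := by
  have hsplit :=
    card_filter_add_card_filter_not (s := (univ : Finset (Fin t → β))) Function.Injective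
  have hinj : #{f : Fin t → β | Function.Injective f} = (Fintype.card β).descFactorial t := by
    rw [← Fintype.card_subtype, Fintype.card_congr (Equiv.subtypeInjectiveEquivEmbedding _ _),
      Fintype.card_embedding_eq, Fintype.card_fin]
  have := Nat.pow_le_descFactorial_add_choose_two_mul (Fintype.card β) t
  rw [hinj, card_univ, Fintype.card_fun, Fintype.card_fin] at hsplit
  omega

theorem exists_injective_lt_card_commonNeighbors [Fintype β] [DecidableEq β] (t m : ℕ)
    (h : m * Fintype.card β ^ t + Fintype.card α * (t.choose 2 * Fintype.card β ^ (t - 1))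
      < ∑ a, #{b | r a b} ^ t) :
    ∃ f : Fin t → β, Function.Injective f ∧ m < #(commonNeighbors r f) := by
  by_contra! H
  have hbound : ∀ f : Fin t → β, #(commonNeighbors r f)
      ≤ m + if Function.Injective f then 0 else Fintype.card α := by
    intro f
    split_ifs with hf
    · simpa using H f hf
    · exact (card_le_univ _).trans (Nat.le_add_left _ _)
  have hcount : ∑ a, #{b | r a b} ^ t
      ≤ m * Fintype.card β ^ t + Fintype.card α * (t.choose 2 * Fintype.card β ^ (t - 1)) :=
    calc ∑ a, #{b | r a b} ^ t = ∑ f : Fin t → β, #(commonNeighbors r f) :=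
          (sum_card_commonNeighbors r t).symm
      _ ≤ ∑ f : Fin t → β, (m + if Function.Injective f then 0 else Fintype.card α) :=
          sum_le_sum fun f _ => hbound f
      _ = m * Fintype.card β ^ t
            + Fintype.card α * #{f : Fin t → β | ¬ Function.Injective f} := by
          simp [sum_add_distrib, sum_ite, mul_comm]
      _ ≤ _ := by gcongr; exact card_filter_not_injective_le t
  exact hcount.not_gt h

theorem exists_complete_bipartite_of_pow_lt [Fintype β] {p : ℝ} (t : ℕ) (hp : 0 ≤ p)
    (hdeg : p * (Fintype.card α * Fintype.card β) ≤ ∑ a, (#{b | r a b} : ℝ))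
    (hlt : ((t : ℝ) - 1) * Fintype.card β + t.choose 2 * Fintype.card α
      < p ^ t * (Fintype.card α * Fintype.card β)) :
    ∃ (S : Finset α) (T : Finset β), #S = t ∧ #T = t ∧ ∀ a ∈ S, ∀ b ∈ T, r a b := by
  classical
  rcases t with _ | u
  · exact ⟨∅, ∅, rfl, rfl, by simp⟩
  set A := Fintype.card α
  set B := Fintype.card β
  have hB : (0 : ℝ) < B := Nat.cast_pos.mpr <| Nat.pos_of_ne_zero fun hB0 => by
    simp only [hB0, Nat.cast_zero, mul_zero, zero_add] at hlt
    exact hlt.not_ge (by positivity)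
  have hpow := pow_mul_card_le_sum_pow (s := univ) (f := fun a => (#{b | r a b} : ℝ))
    (fun _ _ => Nat.cast_nonneg _) (mul_nonneg hp hB.le)
    (by simpa [mul_comm, mul_left_comm] using hdeg) (u + 1)
  have hcount : u * B ^ (u + 1) + A * ((u + 1).choose 2 * B ^ u)
      < ∑ a, #{b | r a b} ^ (u + 1) := by
    have key : (u * B ^ (u + 1) + A * ((u + 1).choose 2 * B ^ u) : ℝ)
        < ∑ a, (#{b | r a b} : ℝ) ^ (u + 1) :=
      calc _ = B ^ u * ((((u + 1 : ℕ) : ℝ) - 1) * B + (u + 1).choose 2 * A) := by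
            push_cast; ring
        _ < B ^ u * (p ^ (u + 1) * (A * B)) := mul_lt_mul_of_pos_left hlt (pow_pos hB u)
        _ = (p * B) ^ (u + 1) * A := by ring
        _ ≤ _ := by simpa using hpow
    exact_mod_cast key
  obtain ⟨f, hf, hcard⟩ := exists_injective_lt_card_commonNeighbors r (u + 1) u hcount
  obtain ⟨S, hS, hScard⟩ := exists_subset_card_eq hcard
  refine ⟨S, univ.map ⟨f, hf⟩, hScard, by simp, fun a ha b hb => ?_⟩
  obtain ⟨i, -, rfl⟩ := mem_map.mp hb
  exact (mem_commonNeighbors r).mp (hS ha) i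

end CommonNeighbors

theorem pow_two_mul_le_of_le_logb_div {b x : ℝ} (hb : 1 < b) (hx : 0 < x) {t : ℕ}
    (ht : (t : ℝ) ≤ Real.logb 2 x / (2 * Real.logb 2 b)) : b ^ (2 * t) ≤ x := by
  have hlogb : 0 < Real.logb 2 b := Real.logb_pos one_lt_two hb
  rw [le_div_iff₀ (by positivity)] at ht
  rw [← Real.logb_le_logb one_lt_two (by positivity) hx, Real.logb_pow]
  push_cast
  linarith

theorem sub_one_mul_add_choose_two_mul_lt {p a b n : ℝ} {t : ℕ} (hp0 : 0 < p) (hp : p ≤ 1 / 2)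
    (hn : (1 / p) ^ (2 * t) ≤ n) (ha : n ≤ a) (hb : n ≤ b) :
    ((t : ℝ) - 1) * b + t.choose 2 * a < p ^ t * (a * b) := by
  set q := (1 / p) ^ t
  have hq : (t : ℝ) + t.choose 2 < q := by
    calc (t : ℝ) + t.choose 2 < 2 ^ t := by exact_mod_cast Nat.add_choose_two_lt_two_pow t
      _ ≤ q := pow_le_pow_left₀ zero_le_two (by rw [le_div_iff₀ hp0]; linarith) t
  have hqn : q * q ≤ n := by rwa [← pow_add, ← two_mul]
  have hpq : p ^ t * q = 1 := by rw [← mul_pow, mul_one_div_cancel hp0.ne', one_pow]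
  have hn0 : 0 < n := lt_of_lt_of_le (by positivity) hqn
  have ha0 : 0 < a := hn0.trans_le ha
  have hb0 : 0 < b := hn0.trans_le hb
  have hC : (0 : ℝ) ≤ t.choose 2 := Nat.cast_nonneg _
  refine lt_of_mul_lt_mul_left ?_ hn0.le
  calc n * (((t : ℝ) - 1) * b + t.choose 2 * a)
      ≤ t * (n * b) + t.choose 2 * (n * a) := by nlinarith
    _ ≤ t * (a * b) + t.choose 2 * (b * a) := by gcongr
    _ = (t + t.choose 2) * (a * b) := by ring
    _ < q * (a * b) := by gcongr
    _ = (q * q) * (p ^ t * (a * b)) := by linear_combination (-(q * (a * b))) * hpq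
    _ ≤ n * (p ^ t * (a * b)) := by gcongr

theorem bipE_eq_sum_card_filter {V : Type*} [DecidableEq V] (G : V → V → Prop) [DecidableRel G]
    (X Y : Finset V) : bipE G X Y = ∑ x : X, #{y : Y | G x y} := by
  rw [bipE, card_filter, sum_product, ← sum_coe_sort X]
  refine sum_congr rfl fun x _ => ?_
  rw [card_filter, ← sum_coe_sort Y]

/-- The Kővári–Sós–Turán theorem, in the quantitative form of the paper: a bipartite graph
with parts `X, Y` and edge density at least `p ∈ (0, 1/2]` contains a complete bipartite
subgraph `K_{t,t}` with `t = ⌊log₂(min{|X|,|Y|}) / (2 log₂(1/p))⌋`. -/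
theorem kovari_sos_turan {V : Type*} [DecidableEq V]
    (G : V → V → Prop) [DecidableRel G] (X Y : Finset V) (p : ℝ)
    (hp0 : 0 < p) (hp : p ≤ 1 / 2) (hd : p ≤ bipD G X Y) :
    ∃ S T : Finset V, S ⊆ X ∧ T ⊆ Y ∧
      S.card = ⌊Real.logb 2 ((min X.card Y.card : ℕ) : ℝ) / (2 * Real.logb 2 (1 / p))⌋₊ ∧
      T.card = S.card ∧
      ∀ s ∈ S, ∀ t ∈ T, G s t := by
  set n := min X.card Y.card
  set t := ⌊Real.logb 2 (n : ℝ) / (2 * Real.logb 2 (1 / p))⌋₊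
  have hdens : 0 < bipD G X Y := hp0.trans_le hd
  have hX : 0 < X.card := Nat.pos_of_ne_zero fun h => by simp [bipD, h] at hdens
  have hY : 0 < Y.card := Nat.pos_of_ne_zero fun h => by simp [bipD, h] at hdens
  have hn : (1 : ℝ) ≤ n := by exact_mod_cast le_min hX hY
  have h1p : 1 < 1 / p := by rw [lt_div_iff₀ hp0]; linarith
  have hpow : (1 / p) ^ (2 * t) ≤ n := pow_two_mul_le_of_le_logb_div h1p (by linarith) <|
    Nat.floor_le <| div_nonneg (Real.logb_nonneg one_lt_two hn)
      (mul_nonneg zero_le_two (Real.logb_pos one_lt_two h1p).le)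
  have hedges : p * (X.card * Y.card) ≤ ∑ x : X, (#{y : Y | G x y} : ℝ) := by
    rw [bipD, le_div_iff₀ (by positivity), bipE_eq_sum_card_filter] at hd
    exact_mod_cast hd
  have hlt := sub_one_mul_add_choose_two_mul_lt hp0 hp hpow
    (Nat.cast_le.mpr (min_le_left X.card Y.card)) (Nat.cast_le.mpr (min_le_right X.card Y.card))
  obtain ⟨S, T, hS, hT, hST⟩ := exists_complete_bipartite_of_pow_lt
    (fun (x : X) (y : Y) => G x y) t hp0.le (by simpa using hedges) (by simpa using hlt)
  refine ⟨S.map (Function.Embedding.subtype _), T.map (Function.Embedding.subtype _), ?_, ?_,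
    by simpa using hS, by simp [hS, hT], ?_⟩
  · exact fun _ => S.property_of_mem_map_subtype
  · exact fun _ => T.property_of_mem_map_subtype
  · simpa using hST
end
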